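/- In the setup of a skew monoid ring ℒ = L∗ℳ with G-action as above, the K-bimodule K[μ]K, where [aμ] = Σ_{g ∈ G/G_μ} g(a)·(gμg⁻¹), equals {[aμ] : a ∈ L^{G_μ}}, and it is a simple K-bimodule. -/

import Mathlib

/-!
For `k₁, k₂ ∈ K = L^G` and `t ∈ G` we have `t(k₁) = k₁`, so `k₁ [aμ] k₂ = [k₁ a μ(k₂) μ]`; hence
`K[aμ]K = {[a x μ] : x ∈ V}` with `V` the additive span of `K · μ(K)`, i.e. the compositum of `K`
and `μ(K)`. By Galois theory `V = L^{G_μ}` as soon as every `g ∈ G` fixing `μ(K)` lies in `G_μ`: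
such a `g` makes `σ = μ⁻¹gμ` fix `K`, so `σ ∈ G`, and then `σ⁻¹μσ ∈ ℳ` differs from `μ` by
`σ⁻¹g ∈ G`, so `σ⁻¹μσ = μ`, which unwinds to `gμg⁻¹ = μ`. Finally `a L^{G_μ} = L^{G_μ}` for
`0 ≠ a ∈ L^{G_μ}`.
-/

section SkewDefs

variable {L : Type*} [Field L]

/-- Left multiplication of `X ∈ ℒ = L ∗ ℳ` (realized inside `RingAut L →₀ L`) by `k ∈ L`. -/
noncomputable def lsm (k : L) (X : RingAut L →₀ L) : RingAut L →₀ L :=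
  X.sum fun ν c => Finsupp.single ν (k * c)

/-- Right multiplication of `X ∈ ℒ = L ∗ ℳ` by `k ∈ L`: `(cν)·k = (c ν(k)) ν`. -/
noncomputable def rsm (X : RingAut L →₀ L) (k : L) : RingAut L →₀ L :=
  X.sum fun ν c => Finsupp.single ν (c * ν k)

/-- The symmetrized element `[aμ] = Σ_{t ∈ T} t(a)·(tμt⁻¹)`, where `T` is a transversal
of the cosets of `G_μ` in `G`. -/
noncomputable def bk (T : Finset (RingAut L)) (μ : RingAut L) (a : L) : RingAut L →₀ L :=
  ∑ t ∈ T, Finsupp.single (t * μ * t⁻¹) (t a)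

end SkewDefs

section SkewBimodule

variable {L : Type*} [Field L]

lemma lsm_sum_single {ι : Type*} (k : L) (s : Finset ι) (ν : ι → RingAut L) (c : ι → L) :
    lsm k (∑ i ∈ s, Finsupp.single (ν i) (c i)) = ∑ i ∈ s, Finsupp.single (ν i) (k * c i) := by
  rw [lsm, ← Finsupp.sum_finsetSum_index (by simp) (by simp [mul_add])]
  simp

lemma rsm_sum_single {ι : Type*} (k : L) (s : Finset ι) (ν : ι → RingAut L) (c : ι → L) :
    rsm (∑ i ∈ s, Finsupp.single (ν i) (c i)) k = ∑ i ∈ s, Finsupp.single (ν i) (c i * ν i k) := by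
  rw [rsm, ← Finsupp.sum_finsetSum_index (by simp) (by simp [add_mul])]
  simp

lemma lsm_rsm_bk {G : Subgroup (RingAut L)} {T : Finset (RingAut L)}
    (hT : (T : Set (RingAut L)) ⊆ G) (μ : RingAut L) {k₁ k₂ : L}
    (hk₁ : ∀ g ∈ G, g k₁ = k₁) (hk₂ : ∀ g ∈ G, g k₂ = k₂) (a : L) :
    lsm k₁ (rsm (bk T μ a) k₂) = bk T μ (k₁ * a * μ k₂) := by
  simp only [bk, rsm_sum_single, lsm_sum_single]
  refine Finset.sum_congr rfl fun t ht => congrArg _ ?_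
  have htG : t ∈ G := hT ht
  have htk₂ : t⁻¹ k₂ = k₂ := hk₂ _ (G.inv_mem htG)
  simp only [RingAut.mul_apply, RingAut.inv_apply] at htk₂ ⊢
  rw [htk₂, map_mul, map_mul, hk₁ t htG]
  ring


noncomputable def bkAddHom (T : Finset (RingAut L)) (μ : RingAut L) : L →+ (RingAut L →₀ L) where
  toFun := bk T μ
  map_zero' := by simp [bk]
  map_add' a b := by simp [bk, Finset.sum_add_distrib]

def fixedFieldConjStab (G : Subgroup (RingAut L)) (μ : RingAut L) : Subfield L where
  carrier := {b | ∀ h ∈ G, h * μ * h⁻¹ = μ → h b = b}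
  mul_mem' hx hy h hG hh := by rw [map_mul, hx h hG hh, hy h hG hh]
  one_mem' h _ _ := map_one h
  add_mem' hx hy h hG hh := by rw [map_add, hx h hG hh, hy h hG hh]
  zero_mem' h _ _ := map_zero h
  neg_mem' hx h hG hh := by rw [map_neg, hx h hG hh]
  inv_mem' x hx h hG hh := by rw [map_inv₀, hx h hG hh]

lemma mem_fixedPoints_subfield_iff {G : Subgroup (RingAut L)} {x : L} :
    x ∈ FixedPoints.subfield G L ↔ ∀ g ∈ G, g x = x :=
  Subtype.forall

lemma mem_of_forall_fixedPoints_apply_eq {G : Subgroup (RingAut L)} [Finite G] {σ : RingAut L}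
    (hσ : ∀ k ∈ FixedPoints.subfield G L, σ k = k) : σ ∈ G := by
  obtain ⟨g, hg⟩ := (FixedPoints.toAlgHom_bijective G L).surjective
    { toRingHom := (σ : L →+* L), commutes' := fun r => hσ r r.2 }
  have : (g : RingAut L) = σ := RingEquiv.ext fun x => DFunLike.congr_fun hg x
  exact this ▸ g.2

lemma mem_adjoin_of_forall_fixes {G : Subgroup (RingAut L)} [Finite G] (S : Set L) {b : L}
    (hb : ∀ g ∈ G, (∀ s ∈ S, g s = s) → g b = b) :
    b ∈ IntermediateField.adjoin (FixedPoints.subfield G L) S := by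
  rw [← IsGalois.fixedField_fixingSubgroup (IntermediateField.adjoin _ S)]
  rintro ⟨σ, hσ⟩
  have hσG : (σ : RingAut L) ∈ G := mem_of_forall_fixedPoints_apply_eq fun k hk => σ.commutes ⟨k, hk⟩
  exact hb _ hσG fun s hs => hσ ⟨s, IntermediateField.subset_adjoin _ _ hs⟩

lemma conj_eq_of_forall_fixes {G : Subgroup (RingAut L)} [Finite G] {M : Set (RingAut L)}
    (hsep : ∀ μ₁ ∈ M, ∀ μ₂ ∈ M, μ₁ * μ₂⁻¹ ∈ G → μ₁ = μ₂)
    (hinv : ∀ g ∈ G, ∀ ν ∈ M, g * ν * g⁻¹ ∈ M) {μ : RingAut L} (hμ : μ ∈ M)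
    {g : RingAut L} (hg : g ∈ G) (hfix : ∀ k ∈ FixedPoints.subfield G L, g (μ k) = μ k) :
    g * μ * g⁻¹ = μ := by
  have hσG : μ⁻¹ * g * μ ∈ G := mem_of_forall_fixedPoints_apply_eq fun k hk => by
    simp [RingAut.mul_apply, hfix k hk]
  have hconj : (μ⁻¹ * g * μ)⁻¹ * μ * (μ⁻¹ * g * μ) = μ := by
    refine hsep _ ?_ μ hμ ?_
    · simpa using hinv _ (G.inv_mem hσG) μ hμ
    · convert G.mul_mem (G.inv_mem hσG) hg using 1
      group
  calc g * μ * g⁻¹ = g * (μ * ((μ⁻¹ * g * μ)⁻¹ * μ * (μ⁻¹ * g * μ)) * μ⁻¹) * g⁻¹ := by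
        rw [hconj]; group
    _ = μ := by group

lemma coe_adjoin_subset_closure_mul {K : Subfield L} [Algebra.IsAlgebraic K L] (F : Subfield L) :
    (IntermediateField.adjoin K (F : Set L) : Set L) ⊆
      AddSubgroup.closure {x | ∃ k ∈ K, ∃ f ∈ F, x = k * f} := by
  intro x (hx : x ∈ (IntermediateField.adjoin K (F : Set L)).toSubalgebra)
  rw [IntermediateField.adjoin_toSubalgebra_of_isAlgebraic fun x _ =>
      Algebra.IsAlgebraic.isAlgebraic x] at hx
  have hspan : x ∈ (Submodule.span K (F : Set L)).toAddSubmonoid := by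
    have := Algebra.adjoin_eq_span K (F : Set L)
    rw [show (F : Set L) = F.toSubmonoid from rfl, Submonoid.closure_eq] at this
    exact this ▸ hx
  rw [Submodule.span_eq_closure] at hspan
  refine AddSubmonoid.closure_le (S := (AddSubgroup.closure _).toAddSubmonoid) |>.2 ?_ hspan
  rintro _ ⟨k, -, f, hf, rfl⟩
  exact AddSubgroup.subset_closure ⟨k, k.2, f, hf, rfl⟩

lemma coe_closure_mul_apply_eq_fixedFieldConjStab {G : Subgroup (RingAut L)} [Finite G]
    {M : Set (RingAut L)} (hsep : ∀ μ₁ ∈ M, ∀ μ₂ ∈ M, μ₁ * μ₂⁻¹ ∈ G → μ₁ = μ₂)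
    (hinv : ∀ g ∈ G, ∀ ν ∈ M, g * ν * g⁻¹ ∈ M) {μ : RingAut L} (hμ : μ ∈ M) :
    (AddSubgroup.closure {x | ∃ k₁ ∈ FixedPoints.subfield G L, ∃ k₂ ∈ FixedPoints.subfield G L,
        x = k₁ * μ k₂} : Set L) = fixedFieldConjStab G μ := by
  set K := FixedPoints.subfield G L
  apply subset_antisymm
  · refine (AddSubgroup.closure_le (fixedFieldConjStab G μ).toAddSubgroup).2 ?_
    rintro _ ⟨k₁, hk₁, k₂, hk₂, rfl⟩ h hG hh
    have hcomm : h * μ = μ * h := by rw [← mul_inv_eq_iff_eq_mul, hh]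
    rw [map_mul, mem_fixedPoints_subfield_iff.1 hk₁ h hG, ← RingAut.mul_apply, hcomm,
      RingAut.mul_apply, mem_fixedPoints_subfield_iff.1 hk₂ h hG]
  · intro b hb
    have hadj : b ∈ IntermediateField.adjoin K (K.map (μ : L →+* L) : Set L) :=
      mem_adjoin_of_forall_fixes _ fun g hg hfix => hb g hg <|
        conj_eq_of_forall_fixes hsep hinv hμ hg fun k hk => hfix _ ⟨k, hk, rfl⟩
    convert coe_adjoin_subset_closure_mul _ hadj using 4
    simp [Subfield.mem_map]

lemma Subfield.image_mul_left_eq {F : Subfield L} {a : L} (ha : a ∈ F) (ha0 : a ≠ 0) :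
    (a * ·) '' (F : Set L) = F := by
  refine subset_antisymm (Set.image_subset_iff.2 fun x hx => F.mul_mem ha hx) fun b hb => ?_
  exact ⟨a⁻¹ * b, F.mul_mem (F.inv_mem ha) hb, by field_simp⟩

lemma coe_closure_lsm_rsm_bk_eq {G : Subgroup (RingAut L)} [Finite G] {M : Set (RingAut L)}
    (hsep : ∀ μ₁ ∈ M, ∀ μ₂ ∈ M, μ₁ * μ₂⁻¹ ∈ G → μ₁ = μ₂)
    (hinv : ∀ g ∈ G, ∀ ν ∈ M, g * ν * g⁻¹ ∈ M) {μ : RingAut L} (hμ : μ ∈ M)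
    {T : Finset (RingAut L)} (hT : (T : Set (RingAut L)) ⊆ G)
    {a : L} (ha : a ∈ fixedFieldConjStab G μ) (ha0 : a ≠ 0) :
    (AddSubgroup.closure {Y | ∃ k₁ ∈ {x : L | ∀ g ∈ G, g x = x},
        ∃ k₂ ∈ {x : L | ∀ g ∈ G, g x = x}, Y = lsm k₁ (rsm (bk T μ a) k₂)} : Set (RingAut L →₀ L))
      = {X | ∃ b ∈ fixedFieldConjStab G μ, X = bk T μ b} := by
  set P := {x | ∃ k₁ ∈ FixedPoints.subfield G L, ∃ k₂ ∈ FixedPoints.subfield G L, x = k₁ * μ k₂}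
  have hgen : {Y | ∃ k₁ ∈ {x : L | ∀ g ∈ G, g x = x}, ∃ k₂ ∈ {x : L | ∀ g ∈ G, g x = x},
      Y = lsm k₁ (rsm (bk T μ a) k₂)} = bkAddHom T μ '' (AddMonoidHom.mulLeft a '' P) := by
    ext Y
    simp only [Set.mem_ofPred_eq, Set.image_image, P, Set.mem_image, mem_fixedPoints_subfield_iff]
    constructor
    · rintro ⟨k₁, hk₁, k₂, hk₂, rfl⟩
      exact ⟨_, ⟨k₁, hk₁, k₂, hk₂, rfl⟩, by rw [lsm_rsm_bk hT μ hk₁ hk₂]; exact congrArg (bk T μ) (by simp only [AddMonoidHom.coe_mulLeft]; ring)⟩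
    · rintro ⟨_, ⟨k₁, hk₁, k₂, hk₂, rfl⟩, rfl⟩
      exact ⟨k₁, hk₁, k₂, hk₂, by rw [lsm_rsm_bk hT μ hk₁ hk₂]; exact congrArg (bk T μ) (by simp only [AddMonoidHom.coe_mulLeft]; ring)⟩
  rw [hgen, ← AddMonoidHom.map_closure, ← AddMonoidHom.map_closure, AddSubgroup.coe_map,
    AddSubgroup.coe_map, coe_closure_mul_apply_eq_fixedFieldConjStab hsep hinv hμ]
  rw [AddMonoidHom.coe_mulLeft, Subfield.image_mul_left_eq ha ha0]
  ext X
  exact ⟨fun ⟨b, hb, hX⟩ => ⟨b, hb, hX.symm⟩, fun ⟨b, hb, hX⟩ => ⟨b, hb, hX.symm⟩⟩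

end SkewBimodule

theorem stmt11_general (L : Type*) [Field L] (G : Subgroup (RingAut L))
    (hGfin : (G : Set (RingAut L)).Finite)
    (M : Submonoid (RingAut L))
    (hsep : ∀ μ₁ ∈ M, ∀ μ₂ ∈ M, μ₁ * μ₂⁻¹ ∈ G → μ₁ = μ₂)
    (hinv : ∀ g ∈ G, ∀ ν ∈ M, g * ν * g⁻¹ ∈ M)
    (μ : RingAut L) (hμ : μ ∈ M)
    (T : Finset (RingAut L))
    (hT1 : (↑T : Set (RingAut L)) ⊆ (G : Set (RingAut L))) :
    (↑(AddSubgroup.closure {Y : RingAut L →₀ L |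
          ∃ k₁ ∈ {x : L | ∀ g ∈ G, g x = x}, ∃ k₂ ∈ {x : L | ∀ g ∈ G, g x = x},
            Y = lsm k₁ (rsm (bk T μ 1) k₂)})
        = {X : RingAut L →₀ L |
            ∃ a : L, (∀ h ∈ G, h * μ * h⁻¹ = μ → h a = a) ∧ X = bk T μ a})
    ∧ ∀ a : L, (∀ h ∈ G, h * μ * h⁻¹ = μ → h a = a) → a ≠ 0 →
        ↑(AddSubgroup.closure {Y : RingAut L →₀ L |
            ∃ k₁ ∈ {x : L | ∀ g ∈ G, g x = x}, ∃ k₂ ∈ {x : L | ∀ g ∈ G, g x = x},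
              Y = lsm k₁ (rsm (bk T μ a) k₂)})
          = {X : RingAut L →₀ L |
              ∃ b : L, (∀ h ∈ G, h * μ * h⁻¹ = μ → h b = b) ∧ X = bk T μ b} := by
  have : Finite G := hGfin.to_subtype
  exact ⟨coe_closure_lsm_rsm_bk_eq (M := M) hsep hinv hμ hT1 (one_mem _) one_ne_zero,
    fun a => coe_closure_lsm_rsm_bk_eq (M := M) hsep hinv hμ hT1⟩

/-- With `K = L^G` and `T` a transversal of `G_μ = {g ∈ G : gμg⁻¹ = μ}` in `G`, the
`K`-bimodule `K[μ]K` generated by `[μ]` equals `{[aμ] : a ∈ L^{G_μ}}`, and it is a simple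
`K`-bimodule: every nonzero `[aμ]` generates it. -/
theorem stmt11 (L : Type*) [Field L] (G : Subgroup (RingAut L))
    (hGfin : (G : Set (RingAut L)).Finite)
    (M : Submonoid (RingAut L))
    (hsep : ∀ μ₁ ∈ M, ∀ μ₂ ∈ M, μ₁ * μ₂⁻¹ ∈ G → μ₁ = μ₂)
    (hinv : ∀ g ∈ G, ∀ ν ∈ M, g * ν * g⁻¹ ∈ M)
    (μ : RingAut L) (hμ : μ ∈ M)
    (T : Finset (RingAut L))
    (hT1 : (↑T : Set (RingAut L)) ⊆ (G : Set (RingAut L)))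
    (hT2 : ∀ g ∈ G, ∃ t ∈ T, ∃ h ∈ G, h * μ * h⁻¹ = μ ∧ g = t * h)
    (hT3 : ∀ t₁ ∈ T, ∀ t₂ ∈ T, (∃ h ∈ G, h * μ * h⁻¹ = μ ∧ t₁ = t₂ * h) → t₁ = t₂) :
    (↑(AddSubgroup.closure {Y : RingAut L →₀ L |
          ∃ k₁ ∈ {x : L | ∀ g ∈ G, g x = x}, ∃ k₂ ∈ {x : L | ∀ g ∈ G, g x = x},
            Y = lsm k₁ (rsm (bk T μ 1) k₂)})
        = {X : RingAut L →₀ L |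
            ∃ a : L, (∀ h ∈ G, h * μ * h⁻¹ = μ → h a = a) ∧ X = bk T μ a})
    ∧ ∀ a : L, (∀ h ∈ G, h * μ * h⁻¹ = μ → h a = a) → a ≠ 0 →
        ↑(AddSubgroup.closure {Y : RingAut L →₀ L |
            ∃ k₁ ∈ {x : L | ∀ g ∈ G, g x = x}, ∃ k₂ ∈ {x : L | ∀ g ∈ G, g x = x},
              Y = lsm k₁ (rsm (bk T μ a) k₂)})
          = {X : RingAut L →₀ L |
              ∃ b : L, (∀ h ∈ G, h * μ * h⁻¹ = μ → h b = b) ∧ X = bk T μ b} :=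
  stmt11_general L G hGfin M hsep hinv μ hμ T hT1
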